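/- Let V be a simple 𝔖-module. Then the following are equivalent: (i) V is a locally finite ℌ-module (every nonzero element of V lies in a finite-dimensional ℌ-submodule); (ii) V is a quasi-Whittaker module of type φ for some Lie algebra homomorphism φ: ℌ → ℂ. -/

import Mathlib

open UniversalEnvelopingAlgebra Polynomial

namespace QW

variable {S : Type} [LieRing S] [LieAlgebra ℂ S]

/-- The chosen elements `e, h, f, p, q, z` form a basis of `S` and satisfy the
structure constants of the Schrödinger algebra. -/
structure IsSchrodinger (e h f p q z : S) : Prop where
  indep : LinearIndependent ℂ ![e, h, f, p, q, z]
  spans : Submodule.span ℂ (Set.range ![e, h, f, p, q, z]) = ⊤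
  lie_he : ⁅h, e⁆ = (2 : ℂ) • e
  lie_hf : ⁅h, f⁆ = (-2 : ℂ) • f
  lie_ef : ⁅e, f⁆ = h
  lie_hp : ⁅h, p⁆ = p
  lie_hq : ⁅h, q⁆ = -q
  lie_pq : ⁅p, q⁆ = z
  lie_eq : ⁅e, q⁆ = p
  lie_pf : ⁅p, f⁆ = -q
  lie_fq : ⁅f, q⁆ = 0
  lie_ep : ⁅e, p⁆ = 0
  lie_ze : ⁅z, e⁆ = 0
  lie_zh : ⁅z, h⁆ = 0
  lie_zf : ⁅z, f⁆ = 0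
  lie_zp : ⁅z, p⁆ = 0
  lie_zq : ⁅z, q⁆ = 0

/-- `v` is a quasi-Whittaker vector of type `φ`, where the Lie algebra homomorphism
`φ : ℌ → ℂ` is recorded by its values `φp = φ(p)`, `φq = φ(q)` (necessarily `φ(z) = 0`). -/
def IsQWVector (p q z : S) {V : Type} [AddCommGroup V] [Module ℂ V] [LieRingModule S V]
    (φp φq : ℂ) (v : V) : Prop :=
  v ≠ 0 ∧ ⁅p, v⁆ = φp • v ∧ ⁅q, v⁆ = φq • v ∧ ⁅z, v⁆ = 0

/-- `V` is a quasi-Whittaker module of type `φ`: it is generated by a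
quasi-Whittaker vector of type `φ`. -/
def IsQWModule (p q z : S) (V : Type) [AddCommGroup V] [Module ℂ V]
    [LieRingModule S V] [LieModule ℂ S V] (φp φq : ℂ) : Prop :=
  ∃ v : V, IsQWVector p q z φp φq v ∧ LieSubmodule.lieSpan ℂ S {v} = ⊤

/-- The action of the universal enveloping algebra `U(𝔖)` on a `𝔖`-module. -/
noncomputable def uact {V : Type} [AddCommGroup V] [Module ℂ V] [LieRingModule S V]
    [LieModule ℂ S V] (u : UniversalEnvelopingAlgebra ℂ S) (v : V) : V :=
  UniversalEnvelopingAlgebra.lift ℂ (LieModule.toEnd ℂ S V) u v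

/-- The element `C = φ(p)²f − φ(q)²e − φ(p)φ(q)h ∈ U(𝔖)`. -/
noncomputable def Cel (e h f : S) (φp φq : ℂ) : UniversalEnvelopingAlgebra ℂ S :=
  φp ^ 2 • ι ℂ f - φq ^ 2 • ι ℂ e - (φp * φq) • ι ℂ h

/-- The element `C₀ = p²f − q²e − hpq ∈ U(𝔖)`. -/
noncomputable def C0 (e h f p q : S) : UniversalEnvelopingAlgebra ℂ S :=
  ι ℂ p ^ 2 * ι ℂ f - ι ℂ q ^ 2 * ι ℂ e - ι ℂ h * ι ℂ p * ι ℂ q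

/-- `δ_{a,0}`, as a complex scalar. -/
noncomputable def dC (a : ℂ) : ℂ := if a = 0 then 1 else 0

/-- `δ_{a,0}`, as a natural number. -/
noncomputable def dN (a : ℂ) : ℕ := if a = 0 then 1 else 0

/-- `X = δ_{φ(q),0}e + δ_{φ(p),0}f`. -/
noncomputable def Xel (e f : S) (φp φq : ℂ) : UniversalEnvelopingAlgebra ℂ S :=
  dC φq • ι ℂ e + dC φp • ι ℂ f

/-- `P₊ = δ_{φ(p),0}p + δ_{φ(q),0}q`. -/
noncomputable def Pplus (p q : S) (φp φq : ℂ) : UniversalEnvelopingAlgebra ℂ S :=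
  dC φp • ι ℂ p + dC φq • ι ℂ q

/-- `P₋ = δ_{φ(q),0}p + δ_{φ(p),0}q`. -/
noncomputable def Pminus (p q : S) (φp φq : ℂ) : UniversalEnvelopingAlgebra ℂ S :=
  dC φq • ι ℂ p + dC φp • ι ℂ q

/-- The quotient of `U(𝔖)` by a left ideal `I` is a Lie module over `S`. -/
noncomputable instance instLieRingModuleUQuot
    (I : Submodule (UniversalEnvelopingAlgebra ℂ S) (UniversalEnvelopingAlgebra ℂ S)) :
    LieRingModule S (UniversalEnvelopingAlgebra ℂ S ⧸ I) where
  bracket x m := ι ℂ x • m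
  add_lie x y m := by
    show ι ℂ (x + y) • m = ι ℂ x • m + ι ℂ y • m
    rw [map_add, add_smul]
  lie_add x m n := by
    show ι ℂ x • (m + n) = ι ℂ x • m + ι ℂ x • n
    rw [smul_add]
  leibniz_lie x y m := by
    show ι ℂ x • (ι ℂ y • m) = ι ℂ ⁅x, y⁆ • m + ι ℂ y • (ι ℂ x • m)
    letI := LieRing.ofAssociativeRing (A := UniversalEnvelopingAlgebra ℂ S)
    rw [LieHom.map_lie, show ⁅ι ℂ x, ι ℂ y⁆ = ι ℂ x * ι ℂ y - ι ℂ y * ι ℂ x from rfl,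
      sub_smul, mul_smul, mul_smul]
    abel

noncomputable instance instLieModuleUQuot
    (I : Submodule (UniversalEnvelopingAlgebra ℂ S) (UniversalEnvelopingAlgebra ℂ S)) :
    LieModule ℂ S (UniversalEnvelopingAlgebra ℂ S ⧸ I) where
  smul_lie c x m := by
    show ι ℂ (c • x) • m = c • (ι ℂ x • m)
    rw [map_smul, smul_assoc]
  lie_smul c x m := by
    show ι ℂ x • (c • m) = c • (ι ℂ x • m)
    rw [← algebraMap_smul (UniversalEnvelopingAlgebra ℂ S) c m, ← mul_smul,
      ← Algebra.commutes, mul_smul, algebraMap_smul]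

/-- The left ideal of `U(𝔖)` generated by `p − φ(p)1`, `q − φ(q)1` and `z`. -/
noncomputable def qwIdeal (p q z : S) (φp φq : ℂ) :
    Submodule (UniversalEnvelopingAlgebra ℂ S) (UniversalEnvelopingAlgebra ℂ S) :=
  Submodule.span _
    {ι ℂ p - algebraMap ℂ _ φp, ι ℂ q - algebraMap ℂ _ φq, ι ℂ z}

/-- The universal quasi-Whittaker module `M_φ = U(𝔖) ⊗_{U(ℌ)} ℂ_φ`, realised as the
quotient of `U(𝔖)` by the left ideal generated by `p − φ(p)1`, `q − φ(q)1`, `z`. -/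
noncomputable abbrev Mphi (p q z : S) (φp φq : ℂ) : Type :=
  UniversalEnvelopingAlgebra ℂ S ⧸ qwIdeal p q z φp φq

/-- The cyclic quasi-Whittaker vector `w = 1 ⊗ w` of `M_φ`. -/
noncomputable def wvec (p q z : S) (φp φq : ℂ) : Mphi p q z φp φq :=
  Submodule.Quotient.mk 1

/-- The submodule `W_{φ,ξ} = U(𝔖)(C − ξ)·w` of `M_φ`. -/
noncomputable def Wsub (e h f p q z : S) (φp φq ξ : ℂ) :
    LieSubmodule ℂ S (Mphi p q z φp φq) :=
  LieSubmodule.lieSpan ℂ S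
    {uact (Cel e h f φp φq - algebraMap ℂ _ ξ) (wvec p q z φp φq)}

/-- The quotient module `L_{φ,ξ} = M_φ / W_{φ,ξ}`. -/
noncomputable abbrev Lphi (e h f p q z : S) (φp φq ξ : ℂ) : Type :=
  Mphi p q z φp φq ⧸ Wsub e h f p q z φp φq ξ

/-- A (finite, decreasing) composition series `⊤ = W 0 > W 1 > ⋯ > W n = ⊥`
of a Lie module, with all the successive quotients irreducible. -/
def IsCompositionChain {V : Type} [AddCommGroup V] [Module ℂ V] [LieRingModule S V]
    [LieModule ℂ S V] {n : ℕ} (W : Fin (n + 1) → LieSubmodule ℂ S V) : Prop :=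
  W 0 = ⊤ ∧ W (Fin.last n) = ⊥ ∧
    ∀ i : Fin n, W i.succ < W i.castSucc ∧
      LieModule.IsIrreducible ℂ S
        (↥(W i.castSucc) ⧸ LieSubmodule.comap (W i.castSucc).incl (W i.succ))




open Set in
lemma restrict_mapsTo_coe_apply {X : Type} [AddCommGroup X] [Module ℂ X]
    {p q : Submodule ℂ X} {f : Module.End ℂ X} (hf : MapsTo f p q) (x : p) :
    ((f.restrict hf x : q) : X) = f x := rfl

open Set Module in
lemma exists_common_eigvec {X : Type} [AddCommGroup X] [Module ℂ X]
    [FiniteDimensional ℂ X] [Nontrivial X] (P Q : Module.End ℂ X)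
    (hc : P * Q = Q * P) :
    ∃ (a b : ℂ) (x : X), x ≠ 0 ∧ P x = a • x ∧ Q x = b • x := by
  obtain ⟨a, ha⟩ := P.exists_eigenvalue
  have hE : (P.eigenspace a) ≠ ⊥ := ha
  haveI : Nontrivial (P.eigenspace a) := Submodule.nontrivial_iff_ne_bot.mpr hE
  have hmap : MapsTo Q (P.eigenspace a) (P.eigenspace a) := by
    intro x hx
    rw [SetLike.mem_coe, Module.End.mem_eigenspace_iff] at hx ⊢
    rw [← Module.End.mul_apply, hc, Module.End.mul_apply, hx, map_smul]
  obtain ⟨b, hb⟩ := (Module.End.exists_eigenvalue (Q.restrict hmap : Module.End ℂ (P.eigenspace a)))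
  obtain ⟨x, hx⟩ := hb.exists_hasEigenvector
  refine ⟨a, b, (x : X), by simpa using hx.right, ?_, ?_⟩
  · exact Module.End.mem_eigenspace_iff.mp x.2
  · have := hx.apply_eq_smul
    have : ((Q.restrict hmap) x : X) = ((b • x : P.eigenspace a) : X) := by rw [this]
    simpa [restrict_mapsTo_coe_apply] using this

open Set Module in
lemma exists_common_eigvec₃ {X : Type} [AddCommGroup X] [Module ℂ X]
    [FiniteDimensional ℂ X] [Nontrivial X] (P Q Z : Module.End ℂ X)
    (h1 : P * Q - Q * P = Z) (h2 : Z * P = P * Z) (h3 : Z * Q = Q * Z) :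
    ∃ (a b : ℂ) (x : X), x ≠ 0 ∧ P x = a • x ∧ Q x = b • x ∧ Z x = 0 := by
  -- every eigenvalue of Z is 0
  have key : ∀ μ : ℂ, Z.HasEigenvalue μ → μ = 0 := by
    intro μ hμ
    set G := Z.maxGenEigenspace μ with hG
    haveI : Nontrivial G := by
      obtain ⟨x, hx⟩ := hμ.exists_hasEigenvector
      refine Submodule.nontrivial_iff_ne_bot.mpr (fun hbot => hx.right ?_)
      have hxG : x ∈ G := Z.genEigenspace_le_maximal μ 1 hx.left
      simpa [hbot] using hxG
    have hPG : MapsTo P G G := Module.End.mapsTo_maxGenEigenspace_of_comm h2 μ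
    have hQG : MapsTo Q G G := Module.End.mapsTo_maxGenEigenspace_of_comm h3 μ
    have hZG : MapsTo Z G G :=
      Module.End.mapsTo_maxGenEigenspace_of_comm (Commute.refl Z) μ
    have hsub : MapsTo (Z - μ • (1 : Module.End ℂ X)) G G := by
      intro x hx
      have h1x := hZG hx
      have : (Z - μ • (1 : Module.End ℂ X)) x = Z x - μ • x := by
        simp [LinearMap.sub_apply]
      rw [SetLike.mem_coe] at h1x hx ⊢
      rw [this]
      exact sub_mem h1x (Submodule.smul_mem _ _ hx)
    -- trace of restriction of Z is zero since Z = [P,Q]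
    have htrZ : LinearMap.trace ℂ G (Z.restrict hZG) = 0 := by
      have hrestr : Z.restrict hZG =
          (P.restrict hPG) * (Q.restrict hQG) - (Q.restrict hQG) * (P.restrict hPG) := by
        ext x
        have : (P * Q - Q * P) (x : X) = Z (x : X) := by rw [h1]
        simpa [LinearMap.sub_apply, Module.End.mul_apply, restrict_mapsTo_coe_apply] using this.symm
      rw [hrestr, map_sub, LinearMap.trace_mul_comm, sub_self]
    -- trace of restriction of Z - μ•1 is zero since it is nilpotent
    have hnil : IsNilpotent ((Z - μ • (1:Module.End ℂ X)).restrict hsub) := by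
      have := Module.End.isNilpotent_restrict_genEigenspace_top Z μ
      exact Module.End.isNilpotent_restrict_of_le (le_of_eq rfl) this
    have htr0 : LinearMap.trace ℂ G ((Z - μ • (1:Module.End ℂ X)).restrict hsub) = 0 :=
      IsNilpotent.eq_zero (LinearMap.isNilpotent_trace_of_isNilpotent hnil)
    have hsplit : (Z - μ • (1:Module.End ℂ X)).restrict hsub =
        Z.restrict hZG - μ • (1 : Module.End ℂ G) := by
      ext x
      simp [restrict_mapsTo_coe_apply, LinearMap.sub_apply]
    rw [hsplit, map_sub, htrZ, map_smul, LinearMap.trace_one, zero_sub, neg_eq_zero,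
      smul_eq_mul] at htr0
    have : (Module.finrank ℂ G : ℂ) ≠ 0 := by
      simpa using (Module.finrank_pos (R := ℂ) (M := G)).ne'
    exact (mul_eq_zero.mp htr0).resolve_right this
  -- hence Z has nontrivial kernel
  obtain ⟨μ, hμ⟩ := Z.exists_eigenvalue
  obtain ⟨w, hw⟩ := hμ.exists_hasEigenvector
  have hw0 : Z w = 0 := by
    have := hw.apply_eq_smul
    rwa [key μ hμ, zero_smul] at this
  set N := LinearMap.ker Z with hN
  haveI : Nontrivial N := Submodule.nontrivial_iff_ne_bot.mpr (by
    intro hbot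
    have : w ∈ N := by simpa [hN, LinearMap.mem_ker] using hw0
    rw [hbot] at this
    exact hw.right (by simpa using this))
  have hPN : MapsTo P N N := by
    intro x hx
    rw [SetLike.mem_coe, hN, LinearMap.mem_ker] at hx ⊢
    rw [← Module.End.mul_apply, h2, Module.End.mul_apply, hx, map_zero]
  have hQN : MapsTo Q N N := by
    intro x hx
    rw [SetLike.mem_coe, hN, LinearMap.mem_ker] at hx ⊢
    rw [← Module.End.mul_apply, h3, Module.End.mul_apply, hx, map_zero]
  have hcomm : (P.restrict hPN) * (Q.restrict hQN) = (Q.restrict hQN) * (P.restrict hPN) := by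
    ext x
    have hx : Z (x : X) = 0 := x.2
    have : (P * Q - Q * P) (x : X) = 0 := by rw [h1, hx]
    have := sub_eq_zero.mp this
    simpa [Module.End.mul_apply, restrict_mapsTo_coe_apply] using this
  obtain ⟨a, b, x, hx0, hPx, hQx⟩ := exists_common_eigvec _ _ hcomm
  refine ⟨a, b, (x : X), by simpa using hx0, ?_, ?_, x.2⟩
  · have : ((P.restrict hPN) x : X) = ((a • x : N) : X) := by rw [hPx]
    simpa [restrict_mapsTo_coe_apply] using this
  · have : ((Q.restrict hQN) x : X) = ((b • x : N) : X) := by rw [hQx]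
    simpa [restrict_mapsTo_coe_apply] using this


open Set Module in
lemma locallyFinite_of_gen {S : Type} [LieRing S] [LieAlgebra ℂ S]
    (e h f p q z : S)
    (hspan : Submodule.span ℂ (Set.range ![e, h, f, p, q, z]) = ⊤)
    (V : Type) [AddCommGroup V] [Module ℂ V] [LieRingModule S V] [LieModule ℂ S V]
    (φp φq : ℂ) (v : V)
    (hp : ⁅p, v⁆ = φp • v) (hq : ⁅q, v⁆ = φq • v) (hz : ⁅z, v⁆ = (0 : V))
    (hgen : LieSubmodule.lieSpan ℂ S {v} = ⊤) :
    ∀ u : V, u ≠ 0 → ∃ W : Submodule ℂ V, u ∈ W ∧ FiniteDimensional ℂ W ∧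
      ∀ w ∈ W, ⁅p, w⁆ ∈ W ∧ ⁅q, w⁆ ∈ W ∧ ⁅z, w⁆ ∈ W := by
  set b : Fin 6 → S := ![e, h, f, p, q, z] with hb
  set A : S → Module.End ℂ V := fun x => LieModule.toEnd ℂ S V x with hA
  have hAapp : ∀ (x : S) (w : V), A x w = ⁅x, w⁆ := fun x w => rfl
  -- the filtration
  let F : ℕ → Submodule ℂ V := fun n =>
    Nat.rec (motive := fun _ => Submodule ℂ V) (Submodule.span ℂ {v})
      (fun _ Fn => Fn ⊔ ⨆ i : Fin 6, Fn.map (A (b i))) n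
  have hF0 : F 0 = Submodule.span ℂ {v} := rfl
  have hFsucc : ∀ n, F (n + 1) = F n ⊔ ⨆ i : Fin 6, (F n).map (A (b i)) := fun n => rfl
  have hmono : Monotone F := monotone_nat_of_le_succ (fun n => by rw [hFsucc]; exact le_sup_left)
  -- finite dimensionality
  have hfin : ∀ n, FiniteDimensional ℂ ↥(F n) := by
    intro n
    induction n with
    | zero => rw [hF0]; infer_instance
    | succ n ih => rw [hFsucc]; exact Submodule.finiteDimensional_sup _ _
  -- bracketing by any element of S raises the filtration degree by at most one
  have hstep : ∀ (s : S) (n : ℕ), ∀ w ∈ F n, ⁅s, w⁆ ∈ F (n + 1) := by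
    intro s n w hw
    have hs : s ∈ Submodule.span ℂ (Set.range b) := by rw [hspan]; trivial
    refine Submodule.span_induction ?_ ?_ ?_ ?_ hs
    · rintro x ⟨i, rfl⟩
      have : ⁅b i, w⁆ ∈ (F n).map (A (b i)) := ⟨w, hw, rfl⟩
      rw [hFsucc]
      exact Submodule.mem_sup_right (Submodule.mem_iSup_of_mem i this)
    · rw [zero_lie]; exact zero_mem _
    · intro x y _ _ hx hy; rw [add_lie]; exact add_mem hx hy
    · intro c x _ hx; rw [smul_lie]; exact Submodule.smul_mem _ _ hx
  -- each F n is invariant under any x with ⁅x, v⁆ ∈ span {v}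
  have hinvar : ∀ x : S, ⁅x, v⁆ ∈ Submodule.span ℂ ({v} : Set V) →
      ∀ n, ∀ w ∈ F n, ⁅x, w⁆ ∈ F n := by
    intro x hxv n
    induction n with
    | zero =>
      intro w hw
      rw [hF0] at hw ⊢
      obtain ⟨c, rfl⟩ := Submodule.mem_span_singleton.mp hw
      rw [lie_smul]
      exact Submodule.smul_mem _ _ hxv
    | succ n ih =>
      intro w hw
      rw [hFsucc] at hw
      have hle : F n ⊔ ⨆ i : Fin 6, (F n).map (A (b i)) ≤ (F (n + 1)).comap (A x) := by
        apply sup_le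
        · intro u hu
          simpa [Submodule.mem_comap, hAapp] using hmono (Nat.le_succ n) (ih u hu)
        · apply iSup_le
          intro i
          rintro _ ⟨u, hu, rfl⟩
          rw [Submodule.mem_comap, hAapp, hAapp]
          rw [leibniz_lie]
          refine add_mem (hstep _ n u hu) ?_
          have : ⁅x, u⁆ ∈ F n := ih u hu
          have : ⁅b i, ⁅x, u⁆⁆ ∈ (F n).map (A (b i)) := ⟨_, this, rfl⟩
          rw [hFsucc]
          exact Submodule.mem_sup_right (Submodule.mem_iSup_of_mem i this)
      simpa [Submodule.mem_comap, hAapp] using hle hw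
  -- the union of the filtration is a Lie submodule
  let K : LieSubmodule ℂ S V :=
    { toSubmodule := ⨆ n, F n
      lie_mem := by
        intro x m hm
        have hm' : m ∈ ⨆ n, F n := hm
        obtain ⟨n, hn⟩ := (Submodule.mem_iSup_of_directed F hmono.directed_le).mp hm'
        show ⁅x, m⁆ ∈ ⨆ n, F n
        exact Submodule.mem_iSup_of_mem (n + 1) (hstep x n m hn) }
  have hvK : v ∈ K := by
    show v ∈ ⨆ n, F n
    exact Submodule.mem_iSup_of_mem 0 (by rw [hF0]; exact Submodule.mem_span_singleton_self v)
  have hKtop : (⊤ : LieSubmodule ℂ S V) ≤ K := by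
    rw [← hgen]
    exact LieSubmodule.lieSpan_le.mpr (by simpa using hvK)
  intro u _
  have hu : u ∈ ⨆ n, F n := hKtop trivial
  obtain ⟨n, hn⟩ := (Submodule.mem_iSup_of_directed F hmono.directed_le).mp hu
  refine ⟨F n, hn, hfin n, fun w hw => ⟨?_, ?_, ?_⟩⟩
  · exact hinvar p (by rw [hp]; exact Submodule.smul_mem _ _ (Submodule.mem_span_singleton_self v)) n w hw
  · exact hinvar q (by rw [hq]; exact Submodule.smul_mem _ _ (Submodule.mem_span_singleton_self v)) n w hw
  · exact hinvar z (by rw [hz]; exact zero_mem _) n w hw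

/-- A simple `𝔖`-module `V` is a locally finite `ℌ`-module iff it is a
quasi-Whittaker module of type `φ` for some Lie algebra homomorphism `φ : ℌ → ℂ`. -/
theorem locallyFinite_iff_quasiWhittaker
    (e h f p q z : S) (hS : IsSchrodinger e h f p q z)
    (V : Type) [AddCommGroup V] [Module ℂ V] [LieRingModule S V] [LieModule ℂ S V]
    (hV : LieModule.IsIrreducible ℂ S V) :
    (∀ v : V, v ≠ 0 → ∃ W : Submodule ℂ V, v ∈ W ∧ FiniteDimensional ℂ W ∧
        ∀ u ∈ W, ⁅p, u⁆ ∈ W ∧ ⁅q, u⁆ ∈ W ∧ ⁅z, u⁆ ∈ W) ↔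
      ∃ φp φq : ℂ, IsQWModule p q z V φp φq := by
  constructor
  · intro hyp
    obtain ⟨v, hv0⟩ : ∃ v : V, v ≠ 0 := by
      by_contra hcon
      push_neg at hcon
      have : (⊥ : LieSubmodule ℂ S V) = ⊤ := by
        ext x; simp [hcon x]
      exact hV.bot_ne_top this
    obtain ⟨W, hvW, hfin, hstab⟩ := hyp v hv0
    haveI : FiniteDimensional ℂ W := hfin
    haveI : Nontrivial W :=
      ⟨⟨⟨v, hvW⟩, 0, fun hc => hv0 (by simpa using congrArg Subtype.val hc)⟩⟩
    have hpW : Set.MapsTo (LieModule.toEnd ℂ S V p) W W := fun u hu => (hstab u hu).1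
    have hqW : Set.MapsTo (LieModule.toEnd ℂ S V q) W W := fun u hu => (hstab u hu).2.1
    have hzW : Set.MapsTo (LieModule.toEnd ℂ S V z) W W := fun u hu => (hstab u hu).2.2
    set P := (LieModule.toEnd ℂ S V p).restrict hpW with hP
    set Q := (LieModule.toEnd ℂ S V q).restrict hqW with hQ
    set Z := (LieModule.toEnd ℂ S V z).restrict hzW with hZ
    have h1 : P * Q - Q * P = Z := by
      ext u
      have hkey : ⁅z, (u : V)⁆ = ⁅p, ⁅q, (u : V)⁆⁆ - ⁅q, ⁅p, (u : V)⁆⁆ := by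
        rw [← hS.lie_pq]; exact lie_lie (x := p) (y := q) (m := (u : V))
      simpa [hP, hQ, hZ, LinearMap.sub_apply, Module.End.mul_apply,
        restrict_mapsTo_coe_apply] using hkey.symm
    have h2 : Z * P = P * Z := by
      ext u
      have hkey : ⁅z, ⁅p, (u : V)⁆⁆ = ⁅p, ⁅z, (u : V)⁆⁆ := by
        have := (lie_lie (x := z) (y := p) (m := (u : V))).symm
        rw [hS.lie_zp, zero_lie] at this
        exact sub_eq_zero.mp this
      simpa [hP, hZ, Module.End.mul_apply, restrict_mapsTo_coe_apply] using hkey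
    have h3 : Z * Q = Q * Z := by
      ext u
      have hkey : ⁅z, ⁅q, (u : V)⁆⁆ = ⁅q, ⁅z, (u : V)⁆⁆ := by
        have := (lie_lie (x := z) (y := q) (m := (u : V))).symm
        rw [hS.lie_zq, zero_lie] at this
        exact sub_eq_zero.mp this
      simpa [hQ, hZ, Module.End.mul_apply, restrict_mapsTo_coe_apply] using hkey
    obtain ⟨a, b, x, hx0, hPx, hQx, hZx⟩ := exists_common_eigvec₃ P Q Z h1 h2 h3
    have hxV0 : (x : V) ≠ 0 := fun hc => hx0 (Subtype.ext (by simpa using hc))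
    have hpx : ⁅p, (x : V)⁆ = a • (x : V) := by
      have := congrArg Subtype.val hPx
      simpa [hP, restrict_mapsTo_coe_apply] using this
    have hqx : ⁅q, (x : V)⁆ = b • (x : V) := by
      have := congrArg Subtype.val hQx
      simpa [hQ, restrict_mapsTo_coe_apply] using this
    have hzx : ⁅z, (x : V)⁆ = 0 := by
      have := congrArg Subtype.val hZx
      simpa [hZ, restrict_mapsTo_coe_apply] using this
    refine ⟨a, b, (x : V), ⟨hxV0, hpx, hqx, hzx⟩, ?_⟩
    have hmem : (x : V) ∈ LieSubmodule.lieSpan ℂ S {(x : V)} :=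
      LieSubmodule.subset_lieSpan rfl
    rcases hV.eq_bot_or_eq_top (LieSubmodule.lieSpan ℂ S {(x : V)}) with hbot | htop
    · rw [hbot] at hmem
      exact absurd ((LieSubmodule.mem_bot _).mp hmem) hxV0
    · exact htop
  · rintro ⟨φp, φq, v, ⟨hv0, hp, hq, hz⟩, hgen⟩
    exact locallyFinite_of_gen e h f p q z hS.spans V φp φq v hp hq hz hgen


end QW
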